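/- For a fixed total expected index size C = μ/(1-p)·L (quality 1), among Smooth configurations, increasing p (and correspondingly decreasing L = C(1-p)/μ) increases the success probability 1-(1-p^a s^k)^L for sufficiently large ages a; formally, for any s ∈ (0,1], k ≥ 1, 0 < p₁ < p₂ < 1 and L₁(1-p₁) = L₂(1-p₂) with L₁, L₂ ≥ 1, there exists A such that for all a ≥ A, 1-(1-p₂^a s^k)^{L₂} > 1-(1-p₁^a s^k)^{L₁}. -/
import Mathlib


/-- Among equal-index-size Smooth configurations (L₁(1-p₁) = L₂(1-p₂)), the one
with larger retention factor p₂ > p₁ has strictly larger success probability for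
all sufficiently old items. -/
theorem smooth_tradeoff_large_age (s : ℝ) (k : ℕ) (p₁ p₂ : ℝ) (L₁ L₂ : ℕ)
    (hs0 : 0 < s) (hs1 : s ≤ 1) (hk : 1 ≤ k)
    (hp₁0 : 0 < p₁) (hp₁₂ : p₁ < p₂) (hp₂1 : p₂ < 1)
    (hL₁ : 1 ≤ L₁) (hL₂ : 1 ≤ L₂)
    (hsize : (L₁ : ℝ) * (1 - p₁) = (L₂ : ℝ) * (1 - p₂)) :
    ∃ A : ℕ, ∀ a : ℕ, A ≤ a →
      1 - (1 - p₁ ^ a * s ^ k) ^ L₁ < 1 - (1 - p₂ ^ a * s ^ k) ^ L₂ := by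
  have hp₂0 : 0 < p₂ := hp₁0.trans hp₁₂
  have hp₁1 : p₁ < 1 := hp₁₂.trans hp₂1
  have hsk0 : 0 < s ^ k := pow_pos hs0 k
  have hsk1 : s ^ k ≤ 1 := pow_le_one₀ hs0.le hs1
  have hL₁0 : (0:ℝ) < L₁ := by exact_mod_cast Nat.lt_of_lt_of_le Nat.zero_lt_one hL₁
  have hL₂0 : (0:ℝ) < L₂ := by exact_mod_cast Nat.lt_of_lt_of_le Nat.zero_lt_one hL₂
  obtain ⟨A₁, hA₁⟩ := exists_pow_lt_of_lt_one
    (show (0:ℝ) < 1/(2*L₁) by positivity) hp₁1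
  set r := p₁ / p₂ with hr
  have hr0 : 0 ≤ r := by positivity
  have hr1 : r < 1 := (div_lt_one hp₂0).mpr hp₁₂
  obtain ⟨A₂, hA₂⟩ := exists_pow_lt_of_lt_one
    (show (0:ℝ) < L₂/(4*L₁) by positivity) hr1
  refine ⟨max A₁ A₂, fun a ha => ?_⟩
  have ha₁ : A₁ ≤ a := le_trans (le_max_left _ _) ha
  have ha₂ : A₂ ≤ a := le_trans (le_max_right _ _) ha
  set x₁ := p₁ ^ a * s ^ k with hx₁
  set x₂ := p₂ ^ a * s ^ k with hx₂
  have hx₁0 : 0 < x₁ := by positivity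
  have hx₂0 : 0 < x₂ := by positivity
  have hx₂1 : x₂ ≤ 1 := by
    calc x₂ ≤ 1 * 1 := mul_le_mul (pow_le_one₀ hp₂0.le hp₂1.le) hsk1 hsk0.le one_pos.le
    _ = 1 := one_mul 1
  have hx₁1 : x₁ ≤ 1 := by
    calc x₁ ≤ 1 * 1 := mul_le_mul (pow_le_one₀ hp₁0.le hp₁1.le) hsk1 hsk0.le one_pos.le
    _ = 1 := one_mul 1
  -- key bound 1: L₁ * x₁ ≤ 1/2
  have hb1 : (L₁:ℝ) * x₁ ≤ 1/2 := by
    have h1 : p₁ ^ a ≤ p₁ ^ A₁ := pow_le_pow_of_le_one hp₁0.le hp₁1.le ha₁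
    calc (L₁:ℝ) * x₁ ≤ L₁ * (p₁^A₁ * 1) := by
          apply mul_le_mul_of_nonneg_left _ hL₁0.le
          exact mul_le_mul h1 hsk1 hsk0.le (pow_nonneg hp₁0.le _)
      _ = L₁ * p₁^A₁ := by ring
      _ ≤ L₁ * (1/(2*L₁)) := mul_le_mul_of_nonneg_left hA₁.le hL₁0.le
      _ = 1/2 := by field_simp
  -- key bound 2: L₁ x₁ < L₂ x₂ / 4
  have hb2 : (L₁:ℝ) * x₁ < (L₂:ℝ) * x₂ / 4 := by
    have hra : r ^ a ≤ r ^ A₂ := pow_le_pow_of_le_one hr0 hr1.le ha₂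
    have h : r ^ a < L₂ / (4 * L₁) := lt_of_le_of_lt hra hA₂
    have hpow : p₁ ^ a = r ^ a * p₂ ^ a := by
      rw [hr, div_pow, div_mul_cancel₀]
      positivity
    rw [hx₁, hx₂, hpow]
    have hp2a : 0 < p₂ ^ a := pow_pos hp₂0 a
    calc (L₁:ℝ) * (r ^ a * p₂ ^ a * s ^ k)
        < L₁ * (L₂ / (4 * L₁) * p₂ ^ a * s ^ k) := by
          apply mul_lt_mul_of_pos_left _ hL₁0
          apply mul_lt_mul_of_pos_right _ hsk0
          exact mul_lt_mul_of_pos_right h hp2a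
      _ = L₂ * (p₂ ^ a * s ^ k) / 4 := by field_simp
  -- Bernoulli bounds
  have hbern₁ : 1 - (L₁:ℝ) * x₁ ≤ (1 - x₁) ^ L₁ := by
    have := one_add_mul_le_pow (a := -x₁) (by linarith) L₁
    have he : (1 : ℝ) + -x₁ = 1 - x₁ := by ring
    rw [he] at this
    linarith [this]
  have hbern₂ : 1 + (L₂:ℝ) * x₂ ≤ (1 + x₂) ^ L₂ := by
    have := one_add_mul_le_pow (a := x₂) (by linarith) L₂
    linarith [this]
  have hup : (1 - x₂) ^ L₂ * (1 + x₂) ^ L₂ ≤ 1 := by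
    rw [← mul_pow]
    have h : (1 - x₂) * (1 + x₂) = 1 - x₂^2 := by ring
    rw [h]
    apply pow_le_one₀ (by nlinarith) (by nlinarith)
  have hd : (0:ℝ) < 1 + (L₂:ℝ) * x₂ := by positivity
  have hkey : (1 - x₂) ^ L₂ < 1 - (L₁:ℝ) * x₁ := by
    have h1 : (1 - x₂) ^ L₂ ≤ 1 / (1 + (L₂:ℝ) * x₂) := by
      rw [le_div_iff₀ hd]
      calc (1 - x₂) ^ L₂ * (1 + (L₂:ℝ) * x₂)
          ≤ (1 - x₂) ^ L₂ * (1 + x₂) ^ L₂ := by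
            apply mul_le_mul_of_nonneg_left hbern₂ (pow_nonneg (by linarith) _)
        _ ≤ 1 := hup
    have h2 : 1 / (1 + (L₂:ℝ) * x₂) < 1 - (L₁:ℝ) * x₁ := by
      rw [div_lt_iff₀ hd]
      have huv : ((L₁:ℝ) * x₁) * ((L₂:ℝ) * x₂) ≤ (1/2) * ((L₂:ℝ) * x₂) :=
        mul_le_mul_of_nonneg_right hb1 (by positivity)
      have hv : (0:ℝ) < (L₂:ℝ) * x₂ := by positivity
      have hexp : (1 - (L₁:ℝ) * x₁) * (1 + (L₂:ℝ) * x₂)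
          = 1 + (L₂:ℝ) * x₂ - (L₁:ℝ) * x₁ - ((L₁:ℝ) * x₁) * ((L₂:ℝ) * x₂) := by ring
      rw [hexp]
      linarith
    linarith
  linarith [hbern₁, hkey]
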